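/- A Boolean dynamical system (B, L, θ) satisfies Condition (K) if and only if it has no cyclic maximal tails, and if and only if for every hereditary saturated ideal H of B the quotient (B/H, L, θ) satisfies Condition (L). -/

import Mathlib

/-!
A pair `((α, η), A)` violating Condition (K) is the same datum as a cyclic maximal tail, the tail
`T_η = {C : θ_β(C) ∈ η for some β}`; it also makes `(α, [A])` a cycle without exits in the
quotient by the hereditary saturated ideal `B \ T_η`, since every word carrying an element
below `A` back to `η` is a power of `α`.

Conversely, let `(α, [A])` be a cycle without exits in `B/H` and `η` an ultrafilter containing
`A` and missing `H`. Exit-freeness forces every word carrying an element below `A` out of `H` to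
be a prefix `σ_m` of `ααα⋯`, and a return of `σ_m` into `η` makes `ααα⋯` `m`-periodic. Let `d`
be the least positive length for which `σ_d` maps `η` below `A` into `η`; such lengths are
closed under addition, and intersecting `A` with finitely many elements of `η` gives `A'` from
which no shorter prefix returns. Writing a return length as `qd + r`, the prefix `σ_{qd}` reflects
membership in `η`, so `σ_r` returns as well and `r = 0`; hence `((σ_d, η), A')` violates (K).
-/

/-- An ideal of a (generalized) Boolean algebra: a non-empty subset closed under
union and under intersection with arbitrary elements. -/
def IsBoolIdeal {B : Type*} [GeneralizedBooleanAlgebra B] (I : Set B) : Prop :=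
  I.Nonempty ∧ (∀ a ∈ I, ∀ b ∈ I, a ⊔ b ∈ I) ∧ (∀ a ∈ I, ∀ b : B, a ⊓ b ∈ I)

/-- A filter in a (generalized) Boolean algebra. -/
def IsBoolFilter {B : Type*} [GeneralizedBooleanAlgebra B] (ξ : Set B) : Prop :=
  ξ.Nonempty ∧ ⊥ ∉ ξ ∧ (∀ a ∈ ξ, ∀ b : B, a ≤ b → b ∈ ξ) ∧ (∀ a ∈ ξ, ∀ b ∈ ξ, a ⊓ b ∈ ξ)

/-- An ultrafilter of a (generalized) Boolean algebra. -/
def IsBoolUltrafilter {B : Type*} [GeneralizedBooleanAlgebra B] (ξ : Set B) : Prop :=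
  IsBoolFilter ξ ∧ ∀ a ∈ ξ, ∀ b b' : B, a = b ⊔ b' → b ∈ ξ ∨ b' ∈ ξ

/-- The relation `A ~ B ⟺ A ∪ A' = B ∪ B'` for some `A', B' ∈ I`. -/
def relI {B : Type*} [GeneralizedBooleanAlgebra B] (I : Set B) (a b : B) : Prop :=
  ∃ a' ∈ I, ∃ b' ∈ I, a ⊔ a' = b ⊔ b'

/-- The action of a finite word `α ∈ L*`: `θ_α = θ_{α_n} ∘ ⋯ ∘ θ_{α_1}`. -/
def wordAct {B L : Type*} (θ : L → B → B) (α : List L) (A : B) : B :=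
  α.foldl (fun x a => θ a x) A

/-- `α^k`: the word `α` concatenated with itself `k` times. -/
def wordPow {L : Type*} (α : List L) (k : ℕ) : List L := (List.replicate k α).flatten

/-- A Boolean dynamical system: a Boolean algebra `B`, a set `L`, and actions
`θ_a` on `B` (Boolean homomorphisms with `θ_a ⊥ = ⊥`) such that each word
action has compact range and closed domain. -/
structure BoolDynSys (B L : Type*) [GeneralizedBooleanAlgebra B] where
  θ : L → B → B
  map_inf : ∀ (a : L) (A A' : B), θ a (A ⊓ A') = θ a A ⊓ θ a A'
  map_sup : ∀ (a : L) (A A' : B), θ a (A ⊔ A') = θ a A ⊔ θ a A'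
  map_sdiff : ∀ (a : L) (A A' : B), θ a (A \ A') = θ a A \ θ a A'
  map_bot : ∀ a : L, θ a ⊥ = ⊥
  compactRange : ∀ α : List L, α ≠ [] → ∃ R : B, IsLUB (Set.range (wordAct θ α)) R
  closedDomain : ∀ α : List L, α ≠ [] → ∀ R : B, IsLUB (Set.range (wordAct θ α)) R →
      ∃ D : B, wordAct θ α D = R

section BDS
variable {B L : Type*} [GeneralizedBooleanAlgebra B]

/-- `Δ_A = {a ∈ L : θ_a(A) ≠ ∅}`. -/
def DeltaSet (S : BoolDynSys B L) (A : B) : Set L := {a : L | S.θ a A ≠ ⊥}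

/-- `A` is regular if every non-empty `C ⊆ A` has `0 < |Δ_C| < ∞`. -/
def RegularElt (S : BoolDynSys B L) (A : B) : Prop :=
  ∀ C : B, C ≤ A → C ≠ ⊥ → (DeltaSet S C).Finite ∧ (DeltaSet S C).Nonempty

/-- An ultrafilter cycle `(α, η)`: `θ_α(A) ∈ η` for all `A ∈ η`. -/
def IsUFCycle (S : BoolDynSys B L) (α : List L) (η : Set B) : Prop :=
  α ≠ [] ∧ IsBoolUltrafilter η ∧ ∀ A ∈ η, wordAct S.θ α A ∈ η

/-- A cycle `(α, A)`: `θ_α(C) = C` for all `C ⊆ A`. -/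
def IsCycle (S : BoolDynSys B L) (α : List L) (A : B) : Prop :=
  α ≠ [] ∧ A ≠ ⊥ ∧ ∀ C : B, C ≤ A → wordAct S.θ α C = C

/-- The cycle `(α, A)` has no exits: for all `t ≤ |α|` and all non-empty
`C ⊆ θ_{α₁⋯α_t}(A)`, `C` is regular with `Δ_C = {α_{t+1}}` (indices mod `|α|`). -/
def NoExits (S : BoolDynSys B L) (α : List L) (A : B) : Prop :=
  ∀ t : ℕ, ∀ _h1 : 1 ≤ t, ∀ h2 : t ≤ α.length, ∀ C : B, C ≠ ⊥ →
    C ≤ wordAct S.θ (α.take t) A →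
    RegularElt S C ∧
      DeltaSet S C = {α.get ⟨t % α.length, Nat.mod_lt t (Nat.lt_of_lt_of_le _h1 h2)⟩}

/-- The cycle `(α, A)` has an exit. -/
def HasExit (S : BoolDynSys B L) (α : List L) (A : B) : Prop :=
  ∃ t : ℕ, ∃ _h1 : 1 ≤ t, ∃ h2 : t ≤ α.length, ∃ C : B, C ≠ ⊥ ∧
    C ≤ wordAct S.θ (α.take t) A ∧
    DeltaSet S C ≠ {α.get ⟨t % α.length, Nat.mod_lt t (Nat.lt_of_lt_of_le _h1 h2)⟩}

/-- Condition (L): every cycle has an exit. -/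
def ConditionL (S : BoolDynSys B L) : Prop :=
  ∀ (α : List L) (A : B), IsCycle S α A → HasExit S α A

/-- A hereditary subset: closed under the actions. -/
def IsHereditary (S : BoolDynSys B L) (H : Set B) : Prop :=
  ∀ A ∈ H, ∀ a : L, S.θ a A ∈ H

/-- A saturated subset: `A ∈ H` whenever `A` is regular and `θ_a(A) ∈ H` for all `a`. -/
def IsSaturated (S : BoolDynSys B L) (H : Set B) : Prop :=
  ∀ A : B, RegularElt S A → (∀ a : L, S.θ a A ∈ H) → A ∈ H

/-- A maximal tail: conditions (T0)–(T5). -/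
def IsMaximalTail (S : BoolDynSys B L) (T : Set B) : Prop :=
  T.Nonempty ∧
  (⊥ ∉ T) ∧
  (∀ A : B, ∀ a : L, S.θ a A ∈ T → A ∈ T) ∧
  (∀ A C : B, A ⊔ C ∈ T → A ∈ T ∨ C ∈ T) ∧
  (∀ A ∈ T, ∀ C : B, A ≤ C → C ∈ T) ∧
  (∀ A ∈ T, RegularElt S A → ∃ a : L, S.θ a A ∈ T) ∧
  (∀ A₁ ∈ T, ∀ A₂ ∈ T, ∃ C ∈ T,
      (∃ α : List L, C ≤ wordAct S.θ α A₁) ∧ (∃ β : List L, C ≤ wordAct S.θ β A₂))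

/-- A cyclic maximal tail. -/
def IsCyclicMaximalTail (S : BoolDynSys B L) (T : Set B) : Prop :=
  IsMaximalTail S T ∧
  ∃ (α : List L) (η : Set B) (A : B), IsUFCycle S α η ∧
    T = {C : B | ∃ β : List L, wordAct S.θ β C ∈ η} ∧ A ∈ η ∧
    ∀ β : List L, β ≠ [] → ∀ C : B, C ≤ A → wordAct S.θ β C ∈ η →
      C ∈ η ∧ ∃ k : ℕ, 0 < k ∧ β = wordPow α k

/-- Condition (K). -/
def ConditionK (S : BoolDynSys B L) : Prop :=
  ¬ ∃ (α : List L) (η : Set B) (A : B), IsUFCycle S α η ∧ A ∈ η ∧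
    ∀ β : List L, β ≠ [] → ∀ C : B, C ≤ A → wordAct S.θ β C ∈ η →
      C ∈ η ∧ ∃ k : ℕ, 0 < k ∧ β = wordPow α k

/-! Notions for the quotient Boolean dynamical system `(B/H, L, θ)` (for a
hereditary saturated ideal `H`), expressed in terms of representatives in `B`. -/

/-- `[C] ⊆ [B']` in `B/H`. -/
def qle (H : Set B) (C A : B) : Prop := ∃ W ∈ H, C ≤ A ⊔ W

/-- `Δ_{[C]}` in `B/H`. -/
def QDelta (S : BoolDynSys B L) (H : Set B) (C : B) : Set L := {a : L | S.θ a C ∉ H}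

/-- `[A]` is regular in `B/H`. -/
def QRegular (S : BoolDynSys B L) (H : Set B) (A : B) : Prop :=
  ∀ C : B, C ∉ H → qle H C A → (QDelta S H C).Finite ∧ (QDelta S H C).Nonempty

/-- `(α, [A])` is a cycle in the quotient `(B/H, L, θ)`. -/
def QCycle (S : BoolDynSys B L) (H : Set B) (α : List L) (A : B) : Prop :=
  α ≠ [] ∧ A ∉ H ∧ ∀ C : B, qle H C A → relI H (wordAct S.θ α C) C

/-- The cycle `(α, [A])` has an exit in the quotient `(B/H, L, θ)`. -/
def QHasExit (S : BoolDynSys B L) (H : Set B) (α : List L) (A : B) : Prop :=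
  ∃ t : ℕ, ∃ _h1 : 1 ≤ t, ∃ h2 : t ≤ α.length, ∃ C : B, C ∉ H ∧
    qle H C (wordAct S.θ (α.take t) A) ∧
    QDelta S H C ≠ {α.get ⟨t % α.length, Nat.mod_lt t (Nat.lt_of_lt_of_le _h1 h2)⟩}

/-- The quotient `(B/H, L, θ)` satisfies Condition (L). -/
def QConditionL (S : BoolDynSys B L) (H : Set B) : Prop :=
  ∀ (α : List L) (A : B), QCycle S H α A → QHasExit S H α A

end BDS


open Function

section WordAction

variable {B L : Type*}

@[simp] lemma wordAct_nil (θ : L → B → B) (A : B) : wordAct θ [] A = A := rfl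

@[simp] lemma wordAct_cons (θ : L → B → B) (a : L) (α : List L) (A : B) :
    wordAct θ (a :: α) A = wordAct θ α (θ a A) := rfl

lemma wordAct_append (θ : L → B → B) (α β : List L) (A : B) :
    wordAct θ (α ++ β) A = wordAct θ β (wordAct θ α A) :=
  List.foldl_append ..

lemma wordPow_succ (α : List L) (k : ℕ) : wordPow α (k + 1) = α ++ wordPow α k := by
  simp [wordPow, List.replicate_succ]

namespace BoolDynSys

variable [GeneralizedBooleanAlgebra B] (S : BoolDynSys B L)

lemma wordAct_sup (α : List L) (A C : B) :
    wordAct S.θ α (A ⊔ C) = wordAct S.θ α A ⊔ wordAct S.θ α C := by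
  induction α generalizing A C with
  | nil => rfl
  | cons a α ih => simp only [wordAct_cons, S.map_sup, ih]

lemma wordAct_sdiff (α : List L) (A C : B) :
    wordAct S.θ α (A \ C) = wordAct S.θ α A \ wordAct S.θ α C := by
  induction α generalizing A C with
  | nil => rfl
  | cons a α ih => simp only [wordAct_cons, S.map_sdiff, ih]

lemma wordAct_bot (α : List L) : wordAct S.θ α ⊥ = ⊥ := by
  simpa using S.wordAct_sdiff α ⊥ ⊥

lemma wordAct_mono (α : List L) {A C : B} (h : A ≤ C) :
    wordAct S.θ α A ≤ wordAct S.θ α C := by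
  rw [← sup_eq_right.2 h, wordAct_sup]
  exact le_sup_left

end BoolDynSys

end WordAction

section Periodic

variable {L : Type*}

def prefixWord (σ : ℕ → L) (m : ℕ) : List L := (List.range m).map σ

variable (σ : ℕ → L)

@[simp] lemma length_prefixWord (m : ℕ) : (prefixWord σ m).length = m := by
  simp [prefixWord]

@[simp] lemma prefixWord_zero : prefixWord σ 0 = [] := rfl

@[simp] lemma getElem_prefixWord {m j : ℕ} (hj : j < (prefixWord σ m).length) :
    (prefixWord σ m)[j] = σ j := by
  simp [prefixWord]

lemma prefixWord_succ (m : ℕ) : prefixWord σ (m + 1) = prefixWord σ m ++ [σ m] := by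
  simp [prefixWord, List.range_succ]

lemma wordAct_prefixWord_succ {B : Type*} (θ : L → B → B) (m : ℕ) (A : B) :
    wordAct θ (prefixWord σ (m + 1)) A = θ (σ m) (wordAct θ (prefixWord σ m) A) := by
  rw [prefixWord_succ, wordAct_append]
  rfl

variable {σ}

lemma Function.Periodic.prefixWord_add {p : ℕ} (hp : Periodic σ p) (m : ℕ) :
    prefixWord σ (p + m) = prefixWord σ p ++ prefixWord σ m := by
  simp only [prefixWord, List.range_add, List.map_append, List.map_map]
  congr 1
  exact List.map_congr_left fun i _ => by simp [add_comm p i, hp i]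

lemma Function.Periodic.wordPow_prefixWord {p : ℕ} (hp : Periodic σ p) (k : ℕ) :
    wordPow (prefixWord σ p) k = prefixWord σ (k * p) := by
  induction k with
  | zero => simp [wordPow]
  | succ k ih => rw [wordPow_succ, ih, ← hp.prefixWord_add, add_mul, one_mul, add_comm]

def cycLetter (α : List L) (hα : α ≠ []) (j : ℕ) : L :=
  α[j % α.length]'(Nat.mod_lt _ (List.length_pos_iff.2 hα))

variable {α : List L} (hα : α ≠ [])

lemma periodic_cycLetter : Periodic (cycLetter α hα) α.length := by
  intro j
  simp [cycLetter]

lemma prefixWord_cycLetter_of_le {t : ℕ} (ht : t ≤ α.length) :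
    prefixWord (cycLetter α hα) t = α.take t := by
  refine List.ext_getElem (by simp [ht]) fun j hj _ => ?_
  simp only [length_prefixWord] at hj
  simp [cycLetter, Nat.mod_eq_of_lt (hj.trans_le ht)]

lemma prefixWord_cycLetter_length : prefixWord (cycLetter α hα) α.length = α := by
  rw [prefixWord_cycLetter_of_le hα le_rfl, List.take_length]

lemma wordPow_eq_prefixWord (k : ℕ) :
    wordPow α k = prefixWord (cycLetter α hα) (k * α.length) := by
  rw [← (periodic_cycLetter hα).wordPow_prefixWord, prefixWord_cycLetter_length]

end Periodic

section Ideals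

variable {B : Type*} [GeneralizedBooleanAlgebra B] {I η : Set B} {x y : B}

namespace IsBoolIdeal

lemma mem_of_le (hI : IsBoolIdeal I) (h : x ≤ y) (hy : y ∈ I) : x ∈ I := by
  simpa [inf_eq_right.2 h] using hI.2.2 y hy x

lemma bot_mem (hI : IsBoolIdeal I) : (⊥ : B) ∈ I :=
  hI.1.elim fun _ hx => hI.mem_of_le bot_le hx

lemma isIdeal (hI : IsBoolIdeal I) : Order.IsIdeal I :=
  ⟨fun _ _ h hx => hI.mem_of_le h hx, hI.1,
    fun x hx y hy => ⟨x ⊔ y, hI.2.1 x hx y hy, le_sup_left, le_sup_right⟩⟩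

end IsBoolIdeal

namespace IsBoolFilter

lemma mem_of_le (hη : IsBoolFilter η) (hx : x ∈ η) (h : x ≤ y) : y ∈ η :=
  hη.2.2.1 x hx y h

lemma inf_mem (hη : IsBoolFilter η) (hx : x ∈ η) (hy : y ∈ η) : x ⊓ y ∈ η :=
  hη.2.2.2 x hx y hy

lemma not_disjoint (hη : IsBoolFilter η) (hx : x ∈ η) (hy : y ∈ η) : ¬ Disjoint x y :=
  fun h => hη.2.1 (h.eq_bot ▸ hη.inf_mem hx hy)

lemma exists_le_forall_le {ι : Type*} (hη : IsBoolFilter η) (hx : x ∈ η) (s : Finset ι)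
    {X : ι → B} (hX : ∀ i ∈ s, X i ∈ η) : ∃ x' ∈ η, x' ≤ x ∧ ∀ i ∈ s, x' ≤ X i := by
  classical
  induction s using Finset.induction_on with
  | empty => exact ⟨x, hx, le_rfl, by simp⟩
  | insert i s _ ih =>
    obtain ⟨x', hx', hx'x, hx'X⟩ := ih fun j hj => hX j (Finset.mem_insert_of_mem hj)
    refine ⟨x' ⊓ X i, hη.inf_mem hx' (hX i (Finset.mem_insert_self i s)),
      inf_le_left.trans hx'x, ?_⟩
    intro j hj
    rcases Finset.mem_insert.1 hj with rfl | hj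
    · exact inf_le_right
    · exact inf_le_left.trans (hx'X j hj)

end IsBoolFilter

namespace IsBoolUltrafilter

lemma mem_or_mem (hη : IsBoolUltrafilter η) (h : x ⊔ y ∈ η) : x ∈ η ∨ y ∈ η :=
  hη.2 _ h x y rfl

lemma sdiff_mem (hη : IsBoolUltrafilter η) (hx : x ∈ η) (hy : y ∉ η) : x \ y ∈ η :=
  (hη.mem_or_mem ((sup_inf_sdiff x y).symm ▸ hx)).resolve_left
    fun h => hy (hη.1.mem_of_le h inf_le_right)

end IsBoolUltrafilter

/-- The complement of a prime ideal separating `I` from `A` (Boolean prime ideal theorem). -/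
lemma IsBoolIdeal.exists_ultrafilter (hI : IsBoolIdeal I) {A : B} (hA : A ∉ I) :
    ∃ η : Set B, IsBoolUltrafilter η ∧ A ∈ η ∧ ∀ x ∈ η, x ∉ I := by
  have hdisj : Disjoint (Order.PFilter.principal A : Set B) (hI.isIdeal.toIdeal : Set B) := by
    rw [Order.Ideal.coe_toIdeal, Set.disjoint_left]
    exact fun x hAx hx => hA (hI.mem_of_le hAx hx)
  obtain ⟨J, hJ, hIJ, hAJ⟩ := DistribLattice.prime_ideal_of_disjoint_filter_ideal hdisj
  rw [Order.Ideal.toIdeal_le] at hIJ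
  have hAJ : A ∉ J := Set.disjoint_left.1 hAJ (Order.PFilter.mem_principal.2 le_rfl)
  refine ⟨(J : Set B)ᶜ, ⟨⟨⟨A, hAJ⟩, fun h => h J.bot_mem, ?_, ?_⟩, ?_⟩, hAJ, ?_⟩
  · exact fun x hx y hxy hy => hx (J.lower hxy hy)
  · exact fun x hx y hy hxy => (hJ.mem_or_mem hxy).elim hx hy
  · rintro a ha b b' rfl
    by_contra! h
    exact ha (J.sup_mem (not_not.1 h.1) (not_not.1 h.2))
  · exact fun x hx hxI => hx (hIJ hxI)

end Ideals

section QuotientOrder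

variable {B : Type*} [GeneralizedBooleanAlgebra B] {I : Set B} {x y z : B}

lemma qle_of_le (hI : IsBoolIdeal I) (h : x ≤ y) : qle I x y :=
  ⟨⊥, hI.bot_mem, by simpa using h⟩

lemma qle_of_sdiff_mem (h : x \ y ∈ I) : qle I x y :=
  ⟨x \ y, h, le_sup_sdiff⟩

lemma qle.sdiff_mem (hI : IsBoolIdeal I) (h : qle I x y) : x \ y ∈ I :=
  let ⟨_, hW, hx⟩ := h
  hI.mem_of_le (sdiff_le_iff.2 hx) hW

lemma qle.trans (hI : IsBoolIdeal I) (hxy : qle I x y) (hyz : qle I y z) : qle I x z := by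
  obtain ⟨W, hW, hx⟩ := hxy
  obtain ⟨W', hW', hy⟩ := hyz
  exact ⟨W' ⊔ W, hI.2.1 _ hW' _ hW,
    hx.trans (sup_le_sup_right hy W |>.trans_eq (sup_assoc ..))⟩

lemma qle.trans_le (hxy : qle I x y) (hyz : y ≤ z) : qle I x z :=
  let ⟨W, hW, hx⟩ := hxy
  ⟨W, hW, hx.trans (sup_le_sup_right hyz W)⟩

lemma qle.inf_self (hxy : qle I x y) : qle I x (x ⊓ y) :=
  let ⟨W, hW, hx⟩ := hxy
  ⟨W, hW, (le_inf le_rfl hx).trans_eq (inf_sup_left ..) |>.trans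
    (sup_le_sup_left inf_le_right _)⟩

lemma IsHereditary.wordAct_mem {L : Type*} {S : BoolDynSys B L} (hHer : IsHereditary S I)
    (β : List L) (hx : x ∈ I) : wordAct S.θ β x ∈ I := by
  induction β generalizing x with
  | nil => exact hx
  | cons a β ih => exact ih (hHer x hx a)

lemma qle.map_wordAct {L : Type*} {S : BoolDynSys B L} (hHer : IsHereditary S I) (β : List L)
    (hxy : qle I x y) : qle I (wordAct S.θ β x) (wordAct S.θ β y) := by
  induction β generalizing x y with
  | nil => exact hxy
  | cons a β ih =>
    obtain ⟨W, hW, hx⟩ := hxy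
    refine ih ⟨S.θ a W, hHer W hW a, ?_⟩
    rw [← S.map_sup]
    exact S.wordAct_mono [a] hx

lemma qle.map_prefixWord_succ {L : Type*} {S : BoolDynSys B L} (hHer : IsHereditary S I)
    {σ : ℕ → L} {u : ℕ} (h : qle I x (wordAct S.θ (prefixWord σ u) y)) :
    qle I (S.θ (σ u) x) (wordAct S.θ (prefixWord σ (u + 1)) y) := by
  rw [wordAct_prefixWord_succ]
  exact h.map_wordAct hHer [σ u]

lemma relI_of_qle (hI : IsBoolIdeal I) (hxy : qle I x y) (hyx : qle I y x) : relI I x y := by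
  obtain ⟨W, hW, hx⟩ := hxy
  obtain ⟨W', hW', hy⟩ := hyx
  refine ⟨y \ x, hI.mem_of_le ?_ hW', x \ y, hI.mem_of_le ?_ hW, by simp [sup_comm]⟩
  · exact sdiff_le_iff.2 hy
  · exact sdiff_le_iff.2 hx

lemma qle_of_relI (h : relI I x y) : qle I x y :=
  let ⟨_, _, W, hW, h⟩ := h
  ⟨W, hW, h ▸ le_sup_left⟩

lemma qle_of_relI_symm (h : relI I x y) : qle I y x :=
  let ⟨W, hW, _, _, h⟩ := h
  ⟨W, hW, h ▸ le_sup_left⟩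

end QuotientOrder

section Tail

variable {B L : Type*} [GeneralizedBooleanAlgebra B] {S : BoolDynSys B L} {α : List L}
  {η : Set B} {A C D : B}

def tailOf (S : BoolDynSys B L) (η : Set B) : Set B := {C | ∃ β : List L, wordAct S.θ β C ∈ η}

lemma isBoolIdeal_compl_tailOf (hη : IsBoolUltrafilter η) : IsBoolIdeal (tailOf S η)ᶜ := by
  refine ⟨⟨⊥, fun ⟨β, h⟩ => hη.1.2.1 (S.wordAct_bot β ▸ h)⟩, ?_, ?_⟩
  · rintro x hx y hy ⟨β, h⟩
    rw [S.wordAct_sup] at h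
    exact (hη.mem_or_mem h).elim (fun h => hx ⟨β, h⟩) fun h => hy ⟨β, h⟩
  · exact fun x hx y ⟨β, h⟩ => hx ⟨β, hη.1.mem_of_le h (S.wordAct_mono β inf_le_left)⟩

lemma isHereditary_compl_tailOf : IsHereditary S (tailOf S η)ᶜ :=
  fun _ hC a ⟨β, h⟩ => hC ⟨a :: β, h⟩

lemma wordAct_mem_of_qle_compl_tailOf (hη : IsBoolUltrafilter η) (h : qle (tailOf S η)ᶜ C D)
    {β : List L} (hC : wordAct S.θ β C ∈ η) : wordAct S.θ β D ∈ η := by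
  obtain ⟨W, hW, hCD⟩ := h
  have := hη.1.mem_of_le hC (S.wordAct_mono β hCD)
  rw [S.wordAct_sup] at this
  exact (hη.mem_or_mem this).resolve_right fun h => hW ⟨β, h⟩

namespace IsUFCycle

lemma wordPow_mem (huf : IsUFCycle S α η) (hC : C ∈ η) (k : ℕ) :
    wordAct S.θ (wordPow α k) C ∈ η := by
  induction k generalizing C with
  | zero => exact hC
  | succ k ih => rw [wordPow_succ, wordAct_append]; exact ih (huf.2.2 C hC)

lemma exists_cons_mem (huf : IsUFCycle S α η) (hC : C ∈ tailOf S η) :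
    ∃ a β, wordAct S.θ (a :: β) C ∈ η := by
  obtain ⟨_ | ⟨a, β⟩, h⟩ := hC
  · obtain ⟨a, α', rfl⟩ := List.exists_cons_of_ne_nil huf.1
    exact ⟨a, α', huf.2.2 C h⟩
  · exact ⟨a, β, h⟩

lemma isMaximalTail_tailOf (huf : IsUFCycle S α η) : IsMaximalTail S (tailOf S η) := by
  have hη := huf.2.1
  refine ⟨hη.1.1.elim fun x hx => ⟨x, [], hx⟩, (isBoolIdeal_compl_tailOf hη).bot_mem,
    fun X a ⟨β, h⟩ => ⟨a :: β, h⟩, ?_, ?_, fun X hX _ => ?_, ?_⟩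
  · rintro X Y ⟨β, h⟩
    rw [S.wordAct_sup] at h
    exact (hη.mem_or_mem h).imp (⟨β, ·⟩) (⟨β, ·⟩)
  · exact fun X ⟨β, h⟩ Y hXY => ⟨β, hη.1.mem_of_le h (S.wordAct_mono β hXY)⟩
  · obtain ⟨a, β, h⟩ := huf.exists_cons_mem hX
    exact ⟨a, β, h⟩
  · rintro X₁ ⟨β₁, h₁⟩ X₂ ⟨β₂, h₂⟩
    exact ⟨_, ⟨[], hη.1.inf_mem h₁ h₂⟩, ⟨β₁, inf_le_left⟩, ⟨β₂, inf_le_right⟩⟩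

lemma isSaturated_compl_tailOf (huf : IsUFCycle S α η) : IsSaturated S (tailOf S η)ᶜ := by
  intro C _ hall hC
  obtain ⟨a, β, h⟩ := huf.exists_cons_mem hC
  exact hall a ⟨β, h⟩

end IsUFCycle

end Tail

section KWitness

variable {B L : Type*} [GeneralizedBooleanAlgebra B] {S : BoolDynSys B L} {α : List L}
  {η : Set B} {A C : B}

def IsKWitness (S : BoolDynSys B L) (α : List L) (η : Set B) (A : B) : Prop :=
  IsUFCycle S α η ∧ A ∈ η ∧
    ∀ β : List L, β ≠ [] → ∀ C : B, C ≤ A → wordAct S.θ β C ∈ η →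
      C ∈ η ∧ ∃ k : ℕ, 0 < k ∧ β = wordPow α k

namespace IsKWitness

lemma isCyclicMaximalTail (hK : IsKWitness S α η A) : IsCyclicMaximalTail S (tailOf S η) :=
  ⟨hK.1.isMaximalTail_tailOf, α, η, A, hK.1, rfl, hK.2⟩

lemma wordAct_qle (hK : IsKWitness S α η A) (hC : C ≤ A) :
    qle (tailOf S η)ᶜ (wordAct S.θ α C) C := by
  refine qle_of_sdiff_mem fun ⟨β, h⟩ => ?_
  have hη := hK.1.2.1
  rw [S.wordAct_sdiff, ← wordAct_append] at h
  obtain ⟨hCη, k, hk, hαβ⟩ := hK.2.2 (α ++ β) (by simp [hK.1.1]) C hC (hη.1.mem_of_le h sdiff_le)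
  obtain ⟨k, rfl⟩ := Nat.exists_eq_add_of_lt hk
  rw [zero_add, wordPow_succ, List.append_cancel_left_eq] at hαβ
  exact hη.1.not_disjoint h (hαβ ▸ hK.1.wordPow_mem hCη k) disjoint_sdiff_self_left

lemma qle_wordAct (hK : IsKWitness S α η A) (hC : C ≤ A) :
    qle (tailOf S η)ᶜ C (wordAct S.θ α C) := by
  refine qle_of_sdiff_mem fun ⟨β, h⟩ => ?_
  have hη := hK.1.2.1
  have hmem : C \ wordAct S.θ α C ∈ η := by
    rcases eq_or_ne β [] with rfl | hβ
    · exact h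
    · exact (hK.2.2 β hβ _ (sdiff_le.trans hC) h).1
  exact hη.1.not_disjoint hmem (hK.1.2.2 C (hη.1.mem_of_le hmem sdiff_le)) disjoint_sdiff_self_left

lemma qCycle (hK : IsKWitness S α η A) : QCycle S (tailOf S η)ᶜ α A := by
  refine ⟨hK.1.1, fun h => h ⟨[], hK.2.1⟩, fun C hC => ?_⟩
  have hI : IsBoolIdeal (tailOf S η)ᶜ := isBoolIdeal_compl_tailOf hK.1.2.1
  have hCA : qle (tailOf S η)ᶜ C (C ⊓ A) := hC.inf_self
  refine relI_of_qle hI ?_ ?_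
  · exact (hCA.map_wordAct isHereditary_compl_tailOf α).trans hI
      ((hK.wordAct_qle inf_le_right).trans_le inf_le_left)
  · exact (hCA.trans hI (hK.qle_wordAct inf_le_right)).trans_le (S.wordAct_mono α inf_le_left)

lemma eq_cycLetter_of_cons_mem (hK : IsKWitness S α η A) {t : ℕ} (ht : t ≤ α.length)
    (hC : qle (tailOf S η)ᶜ C (wordAct S.θ (α.take t) A)) {c : L} {δ : List L}
    (hc : wordAct S.θ (c :: δ) C ∈ η) : c = cycLetter α hK.1.1 t := by
  have hA : wordAct S.θ (α.take t ++ c :: δ) A ∈ η := by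
    rw [wordAct_append]
    exact wordAct_mem_of_qle_compl_tailOf hK.1.2.1 hC hc
  obtain ⟨-, k, -, hk⟩ := hK.2.2 _ (by simp) A le_rfl hA
  rw [wordPow_eq_prefixWord hK.1.1] at hk
  have hlt : t < (α.take t ++ c :: δ).length := by simp; omega
  simpa [List.getElem_append_right, ht] using List.getElem_of_eq hk hlt

lemma not_qHasExit (hK : IsKWitness S α η A) : ¬ QHasExit S (tailOf S η)ᶜ α A := by
  rintro ⟨t, _, ht, C, hC, hCt, hne⟩
  refine hne (Set.eq_singleton_iff_unique_mem.2 ⟨?_, fun a ha => ?_⟩)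
  · obtain ⟨c, δ, h⟩ := hK.1.exists_cons_mem (not_not.1 hC)
    have hc : c = cycLetter α hK.1.1 t := hK.eq_cycLetter_of_cons_mem ht hCt h
    refine not_not.2 ⟨δ, ?_⟩
    change wordAct S.θ (cycLetter α hK.1.1 t :: δ) C ∈ η
    rwa [← hc]
  · obtain ⟨β, h⟩ := not_not.1 ha
    exact hK.eq_cycLetter_of_cons_mem ht hCt (δ := β) h

end IsKWitness

end KWitness

section Returns

variable {B L : Type*} [GeneralizedBooleanAlgebra B] {S : BoolDynSys B L} {η : Set B} {A : B}
  {σ : ℕ → L} {d m : ℕ}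

def returnSet (S : BoolDynSys B L) (η : Set B) (A : B) (σ : ℕ → L) : Set ℕ :=
  {m | ∀ X ∈ η, X ≤ A → wordAct S.θ (prefixWord σ m) X ∈ η}

lemma add_mem_returnSet (hη : IsBoolUltrafilter η) (hA : A ∈ η) (hp : Periodic σ m)
    (hm : m ∈ returnSet S η A σ) {m' : ℕ} (hm' : m' ∈ returnSet S η A σ) :
    m + m' ∈ returnSet S η A σ := by
  intro X hX hXA
  rw [hp.prefixWord_add, wordAct_append]
  exact hη.1.mem_of_le (hm' _ (hη.1.inf_mem (hm X hX hXA) hA) inf_le_right)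
    (S.wordAct_mono _ inf_le_left)

lemma nat_mul_mem_returnSet (hη : IsBoolUltrafilter η) (hA : A ∈ η) (hp : Periodic σ d)
    (hd : d ∈ returnSet S η A σ) (q : ℕ) : q * d ∈ returnSet S η A σ := by
  induction q with
  | zero => exact fun X hX _ => by simpa using hX
  | succ q ih => rw [add_mul, one_mul, add_comm]; exact add_mem_returnSet hη hA hp hd ih

lemma mem_of_wordAct_mem_of_mem_returnSet (hη : IsBoolUltrafilter η) (hA : A ∈ η)
    (hm : m ∈ returnSet S η A σ) {V : B} (hV : wordAct S.θ (prefixWord σ m) V ∈ η) : V ∈ η := by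
  by_contra hV'
  have h := hm _ (hη.sdiff_mem hA hV') sdiff_le
  rw [S.wordAct_sdiff] at h
  exact hη.1.not_disjoint h hV disjoint_sdiff_self_left

lemma exists_minimal_returnSet (hη : IsBoolUltrafilter η) (hA : A ∈ η) {n : ℕ} (hn : 0 < n)
    (hnR : n ∈ returnSet S η A σ) :
    ∃ d, 0 < d ∧ d ∈ returnSet S η A σ ∧ ∃ A' ∈ η, A' ≤ A ∧
      ∀ r, 0 < r → r < d → ∀ C ≤ A', wordAct S.θ (prefixWord σ r) C ∉ η := by
  classical
  have hex : ∃ d, 0 < d ∧ d ∈ returnSet S η A σ := ⟨n, hn, hnR⟩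
  set d := Nat.find hex
  have hshort : ∀ r ∈ Finset.Ioo 0 d, ∃ X ∈ η, X ≤ A ∧ wordAct S.θ (prefixWord σ r) X ∉ η := by
    intro r hr
    rw [Finset.mem_Ioo] at hr
    simpa [returnSet, hr.1] using Nat.find_min hex hr.2
  choose! X hXη hXA hXr using hshort
  obtain ⟨A', hA', hA'A, hA'X⟩ := hη.1.exists_le_forall_le hA (Finset.Ioo 0 d) hXη
  refine ⟨d, (Nat.find_spec hex).1, (Nat.find_spec hex).2, A', hA', hA'A,
    fun r hr hrd C hC hCr => ?_⟩
  have hr' : r ∈ Finset.Ioo 0 d := Finset.mem_Ioo.2 ⟨hr, hrd⟩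
  exact hXr r hr' (hη.1.mem_of_le hCr (S.wordAct_mono _ (hC.trans (hA'X r hr'))))

theorem exists_isKWitness_of_forced (hη : IsBoolUltrafilter η) (hA : A ∈ η) {n : ℕ}
    (hn : 0 < n) (hnR : n ∈ returnSet S η A σ)
    (hforced : ∀ β C, C ≤ A → wordAct S.θ β C ∈ η → β = prefixWord σ β.length)
    (hper : ∀ m C, C ≤ A → wordAct S.θ (prefixWord σ m) C ∈ η → Periodic σ m) :
    ∃ α A', IsKWitness S α η A' := by
  obtain ⟨d, hd, hdR, A', hA', hA'A, hshort⟩ := exists_minimal_returnSet hη hA hn hnR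
  have hpd : Periodic σ d := hper d A le_rfl (hdR A hA le_rfl)
  refine ⟨prefixWord σ d, A', ⟨List.ne_nil_of_length_pos (by simpa using hd), hη,
    fun X hX => ?_⟩, hA', fun β hβ C hC hCβ => ?_⟩
  · exact hη.1.mem_of_le (hdR _ (hη.1.inf_mem hX hA) inf_le_right) (S.wordAct_mono _ inf_le_left)
  obtain ⟨m, rfl⟩ : ∃ m, β = prefixWord σ m := ⟨_, hforced β C (hC.trans hA'A) hCβ⟩
  have hpm := hper m C (hC.trans hA'A) hCβ
  have hm : m = m % d + m / d * d := (Nat.mod_add_div' m d).symm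
  have hpr : Periodic σ (m % d) := fun j => by
    have := hpd.nat_mul (m / d) (j + m % d)
    rw [Nat.cast_id, add_assoc, ← hm, hpm] at this
    exact this.symm
  rw [hm, hpr.prefixWord_add, wordAct_append] at hCβ
  have hCr := mem_of_wordAct_mem_of_mem_returnSet hη hA
    (nat_mul_mem_returnSet hη hA hpd hdR (m / d)) hCβ
  have hr : m % d = 0 := by
    by_contra h
    exact hshort _ (Nat.pos_of_ne_zero h) (Nat.mod_lt _ hd) C hC hCr
  rw [hr, zero_add] at hm
  have hm0 : m ≠ 0 := by rintro rfl; exact hβ rfl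
  refine ⟨by simpa [hr] using hCr, m / d,
    Nat.pos_of_ne_zero fun h => hm0 (by rw [hm, h, zero_mul]), ?_⟩
  rw [hpd.wordPow_prefixWord, ← hm]

end Returns

section ExitFree

variable {B L : Type*} [GeneralizedBooleanAlgebra B] {S : BoolDynSys B L} {H : Set B}
  {α : List L} {A D : B}

namespace QCycle

lemma exists_take_qle (hI : IsBoolIdeal H) (hHer : IsHereditary S H) (hcyc : QCycle S H α A)
    (u : ℕ) : ∃ t, 1 ≤ t ∧ t ≤ α.length ∧ t ≡ u [MOD α.length] ∧
      qle H (wordAct S.θ (prefixWord (cycLetter α hcyc.1) u) A) (wordAct S.θ (α.take t) A) := by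
  have hn : 0 < α.length := List.length_pos_iff.2 hcyc.1
  have hp := periodic_cycLetter hcyc.1
  have htake : ∀ t ≤ α.length, prefixWord (cycLetter α hcyc.1) t = α.take t :=
    fun _ => prefixWord_cycLetter_of_le hcyc.1
  generalize cycLetter α hcyc.1 = σ at *
  have hrel := hcyc.2.2 A (qle_of_le hI le_rfl)
  induction u with
  | zero =>
    refine ⟨α.length, hn, le_rfl, by simp [Nat.ModEq], ?_⟩
    simpa using qle_of_relI_symm hrel
  | succ u ih =>
    obtain ⟨t, ht1, htn, htu, hq⟩ := ih
    have hσ : σ u = σ t := by rw [← hp.map_mod_nat u, ← hp.map_mod_nat t, htu]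
    have hstep : qle H (wordAct S.θ (prefixWord σ (u + 1)) A)
        (S.θ (σ t) (wordAct S.θ (α.take t) A)) := by
      rw [wordAct_prefixWord_succ, hσ]
      exact hq.map_wordAct hHer [σ t]
    rcases htn.lt_or_eq with htn | rfl
    · refine ⟨t + 1, by omega, htn, htu.add_right 1, ?_⟩
      rwa [← htake t htn.le, ← wordAct_prefixWord_succ σ S.θ t A, htake (t + 1) htn] at hstep
    · refine ⟨1, le_rfl, hn, (Nat.add_mod_left _ _).symm.trans (htu.add_right 1), ?_⟩
      rw [List.take_length, hp.eq] at hstep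
      refine hstep.trans hI ?_
      rw [← htake 1 hn]
      exact (qle_of_relI hrel).map_wordAct hHer [σ 0]

end QCycle

structure IsExitFreeQCycle (S : BoolDynSys B L) (H : Set B) (α : List L) (A : B) : Prop where
  isBoolIdeal : IsBoolIdeal H
  isHereditary : IsHereditary S H
  qCycle : QCycle S H α A
  not_qHasExit : ¬ QHasExit S H α A

namespace IsExitFreeQCycle

lemma qDelta_eq_singleton (h : IsExitFreeQCycle S H α A) {u : ℕ} (hD : D ∉ H)
    (hDu : qle H D (wordAct S.θ (prefixWord (cycLetter α h.qCycle.1) u) A)) :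
    QDelta S H D = {cycLetter α h.qCycle.1 u} := by
  obtain ⟨t, ht1, htn, htu, hq⟩ := h.qCycle.exists_take_qle h.isBoolIdeal h.isHereditary u
  by_contra hne
  refine h.not_qHasExit ⟨t, ht1, htn, D, hD, hDu.trans h.isBoolIdeal hq, ?_⟩
  convert hne using 3
  simp [cycLetter, show t % α.length = u % α.length from htu]

lemma prefixWord_append_eq (h : IsExitFreeQCycle S H α A) (β : List L) {u : ℕ}
    (hDu : qle H D (wordAct S.θ (prefixWord (cycLetter α h.qCycle.1) u) A))
    (hβ : wordAct S.θ β D ∉ H) :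
    prefixWord (cycLetter α h.qCycle.1) u ++ β =
      prefixWord (cycLetter α h.qCycle.1) (u + β.length) := by
  induction β generalizing u D with
  | nil => simp
  | cons b β ih =>
    have hbD : S.θ b D ∉ H := fun hb => hβ (h.isHereditary.wordAct_mem β hb)
    have hb : b ∈ QDelta S H D := hbD
    rw [h.qDelta_eq_singleton (fun hD => hbD (h.isHereditary D hD b)) hDu,
      Set.mem_singleton_iff] at hb
    subst hb
    rw [List.length_cons, add_comm β.length, ← add_assoc, ← List.singleton_append,
      ← List.append_assoc, ← prefixWord_succ, ih (hDu.map_prefixWord_succ h.isHereditary) hβ]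

lemma cycLetter_eq (h : IsExitFreeQCycle S H α A) {u v : ℕ} (hD : D ∉ H)
    (hDu : qle H D (wordAct S.θ (prefixWord (cycLetter α h.qCycle.1) u) A))
    (hDv : qle H D (wordAct S.θ (prefixWord (cycLetter α h.qCycle.1) v) A)) :
    cycLetter α h.qCycle.1 u = cycLetter α h.qCycle.1 v :=
  Set.singleton_eq_singleton_iff.1 <|
    (h.qDelta_eq_singleton hD hDu).symm.trans (h.qDelta_eq_singleton hD hDv)

lemma cycLetter_add_eq (h : IsExitFreeQCycle S H α A) (j : ℕ) {u v : ℕ} (hD : D ∉ H)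
    (hDu : qle H D (wordAct S.θ (prefixWord (cycLetter α h.qCycle.1) u) A))
    (hDv : qle H D (wordAct S.θ (prefixWord (cycLetter α h.qCycle.1) v) A)) :
    cycLetter α h.qCycle.1 (u + j) = cycLetter α h.qCycle.1 (v + j) := by
  induction j generalizing u v D with
  | zero => exact h.cycLetter_eq hD hDu hDv
  | succ j ih =>
    have hσD : cycLetter α h.qCycle.1 u ∈ QDelta S H D := by
      rw [h.qDelta_eq_singleton hD hDu]
      rfl
    have := ih hσD (hDu.map_prefixWord_succ h.isHereditary)
      (h.cycLetter_eq hD hDu hDv ▸ hDv.map_prefixWord_succ h.isHereditary)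
    rwa [add_right_comm u, add_right_comm v] at this

theorem exists_isKWitness (h : IsExitFreeQCycle S H α A) :
    ∃ α' η A', IsKWitness S α' η A' := by
  have hI := h.isBoolIdeal
  obtain ⟨η, hη, hA, hηH⟩ := hI.exists_ultrafilter h.qCycle.2.1
  have hret : α.length ∈ returnSet S η A (cycLetter α h.qCycle.1) := by
    intro X hX hXA
    rw [prefixWord_cycLetter_length]
    by_contra hX'
    exact hηH _ (hη.sdiff_mem hX hX')
      (qle_of_relI_symm (h.qCycle.2.2 X (qle_of_le hI hXA)) |>.sdiff_mem hI)
  obtain ⟨α', A', hK⟩ := exists_isKWitness_of_forced hη hA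
    (List.length_pos_iff.2 h.qCycle.1) hret
    (fun β C hC hβ => by
      simpa using h.prefixWord_append_eq β (u := 0) (qle_of_le hI hC) (hηH _ hβ))
    (fun m C hC hm j => by
      simpa [add_comm] using h.cycLetter_add_eq j (v := 0) (hηH _ (hη.1.inf_mem hm hA))
        (qle_of_le hI (inf_le_left.trans (S.wordAct_mono _ hC))) (qle_of_le hI inf_le_right))
  exact ⟨α', η, A', hK⟩

end IsExitFreeQCycle

end ExitFree

/-- A Boolean dynamical system `(B, L, θ)` satisfies Condition (K) if and only if
it has no cyclic maximal tails, and if and only if for every hereditary saturated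
ideal `H` of `B` the quotient `(B/H, L, θ)` satisfies Condition (L). -/
theorem conditionK_iff {B L : Type*} [GeneralizedBooleanAlgebra B]
    (S : BoolDynSys B L) :
    (ConditionK S ↔ ¬ ∃ T : Set B, IsCyclicMaximalTail S T) ∧
    (ConditionK S ↔ ∀ H : Set B, IsBoolIdeal H → IsHereditary S H →
      IsSaturated S H → QConditionL S H) := by
  have hK : ConditionK S ↔ ¬ ∃ α η A, IsKWitness S α η A := Iff.rfl
  refine ⟨hK.trans (not_congr ⟨?_, ?_⟩), hK.trans ⟨?_, ?_⟩⟩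
  · rintro ⟨α, η, A, hw⟩
    exact ⟨_, hw.isCyclicMaximalTail⟩
  · rintro ⟨T, -, α, η, A, huf, -, hA, hw⟩
    exact ⟨α, η, A, huf, hA, hw⟩
  · intro h H hI hHer _ α A hcyc
    by_contra hnoex
    exact h (IsExitFreeQCycle.exists_isKWitness ⟨hI, hHer, hcyc, hnoex⟩)
  · rintro h ⟨α, η, A, hw⟩
    exact hw.not_qHasExit (h _ (isBoolIdeal_compl_tailOf hw.1.2.1) isHereditary_compl_tailOf
      hw.1.isSaturated_compl_tailOf α A hw.qCycle)
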